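/- For n \geq 4, the identity 2 F_{2n-4} + 4 \binom{2n-4}{2} F_{2n-6} + 6 \binom{2n-4}{4} F_{2n-8} = \frac{n(n-1)}{(2n-1)(2n-3)} F_{2n} holds, where F_{2k} = (2k-1)!!. -/

import Mathlib

open Finset

/-- A matching (fixed point free involution). -/
def IsMatching {m : ℕ} (π : Equiv.Perm (Fin m)) : Prop :=
  π * π = 1 ∧ ∀ i, π i ≠ i

instance {m : ℕ} (π : Equiv.Perm (Fin m)) : Decidable (IsMatching π) := by
  unfold IsMatching; infer_instance

/-- The set of matchings in `S_{2n}`. -/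
def matchings (n : ℕ) : Finset (Equiv.Perm (Fin (2 * n))) :=
  Finset.univ.filter IsMatching

/-- Descent set (0-based indices `i` with `π i > π (i+1)`). -/
def desSet {m : ℕ} (π : Equiv.Perm (Fin m)) : Finset (Fin m) :=
  Finset.univ.filter fun i =>
    if h : (i : ℕ) + 1 < m then π ⟨(i : ℕ) + 1, h⟩ < π i else False

/-- Descent number `d(π) = |Des(π)| + 1`. -/
def desNum {m : ℕ} (π : Equiv.Perm (Fin m)) : ℕ := (desSet π).card + 1

/-- Major index: sum of the (1-based) descent positions. -/
def maj {m : ℕ} (π : Equiv.Perm (Fin m)) : ℕ := ∑ i ∈ desSet π, ((i : ℕ) + 1)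

/-- The double factorial `(2n-1)!! = ∏_{i=1}^n (2i-1)`. -/
def doubleFac (n : ℕ) : ℕ := ∏ i ∈ Finset.range n, (2 * i + 1)

theorem doubleFac_succ (n : ℕ) : doubleFac (n + 1) = doubleFac n * (2 * n + 1) :=
  prod_range_succ _ _

theorem Nat.cast_choose_four {K : Type*} [DivisionRing K] [CharZero K] (a : ℕ) :
    (a.choose 4 : K) = a * (a - 1) * (a - 2) * (a - 3) / 24 := by
  rw [cast_choose_eq_descPochhammer_div]
  simp [descPochhammer_succ_eval, Nat.factorial]

theorem stmt7 (n : ℕ) (hn : 4 ≤ n) :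
    2 * (doubleFac (n - 2) : ℚ) + 4 * (Nat.choose (2 * n - 4) 2 : ℚ) * doubleFac (n - 3)
        + 6 * (Nat.choose (2 * n - 4) 4 : ℚ) * doubleFac (n - 4)
      = ((n : ℚ) * (n - 1)) / ((2 * n - 1) * (2 * n - 3)) * doubleFac n := by
  obtain ⟨m, rfl⟩ : ∃ m, n = m + 4 := ⟨n - 4, by omega⟩
  rw [show m + 4 - 2 = m + 2 by omega, show m + 4 - 3 = m + 1 by omega, Nat.add_sub_cancel,
    show 2 * (m + 4) - 4 = 2 * m + 4 by omega, Nat.cast_choose_two, Nat.cast_choose_four]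
  simp only [doubleFac_succ]
  push_cast
  have h5 : 2 * ((m : ℚ) + 4) - 3 ≠ 0 := by linarith [(m.cast_nonneg : (0 : ℚ) ≤ m)]
  have h7 : 2 * ((m : ℚ) + 4) - 1 ≠ 0 := by linarith [(m.cast_nonneg : (0 : ℚ) ≤ m)]
  field_simp
  ring
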